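/- (PAC guarantee of the binomial-tail threshold, Theorem 1) Let Z = ((x₁,y₁),…,(xₙ,yₙ)) be i.i.d. from D, let f : X × Y → ℝ≥0 be a score function, and C_τ(x) = {y : f(x,y) ≥ τ}. Let k* be the largest k ∈ ℕ ∪ {0} with F(k; n, ε) ≤ δ, where F is the Binomial(n, ε) CDF, and let τ̂ be the largest τ such that the number of calibration examples with yᵢ ∉ C_τ(xᵢ) is at most k* (with τ̂ = 0 if infeasible). Then with probability at least 1 − δ over Z, P_{(x,y)~D}(y ∉ C_τ̂(x)) ≤ ε. -/

import Mathlib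

/-!
Let `q` be an `ε`-quantile of the score: `D (f < q) ≤ ε ≤ D (f ≤ q)`. If `τ̂ > q`, every
calibration point with `f ≤ q` is an error of `C_τ̂`, so at most `k*` of the `n` points fall in
`{f ≤ q}`. That event has probability `F(k*; n, p)` with `p = D (f ≤ q) ≥ ε`, and the binomial
CDF is antitone in `p` (its derivative is `-n` times a Bernstein polynomial), so it has
probability at most `F(k*; n, ε) ≤ δ`. Off that event `τ̂ ≤ q`, hence `D (f < τ̂) ≤ D (f < q) ≤ ε`.
-/

open MeasureTheory Finset Filter Polynomial ProbabilityTheory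

lemma derivative_sum_range_bernsteinPolynomial (R : Type*) [CommRing R] (n k : ℕ) :
    derivative (∑ ν ∈ range (k + 1), bernsteinPolynomial R n ν) =
      -n * bernsteinPolynomial R (n - 1) k := by
  induction k with
  | zero => simp [bernsteinPolynomial.derivative_zero]
  | succ k ih =>
    rw [sum_range_succ, derivative_add, ih, bernsteinPolynomial.derivative_succ]
    ring

lemma antitoneOn_sum_range_choose_mul_pow_mul_pow (n k : ℕ) :
    AntitoneOn
      (fun p : ℝ => ∑ i ∈ range (k + 1), (n.choose i : ℝ) * p ^ i * (1 - p) ^ (n - i))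
      (Set.Icc 0 1) := by
  have hbernstein :
      (fun p : ℝ => ∑ i ∈ range (k + 1), (n.choose i : ℝ) * p ^ i * (1 - p) ^ (n - i)) =
        fun p => (∑ ν ∈ range (k + 1), bernsteinPolynomial ℝ n ν).eval p := by
    ext p
    simp [bernsteinPolynomial, eval_finsetSum]
  rw [hbernstein]
  refine antitoneOn_of_deriv_nonpos (convex_Icc 0 1) (Polynomial.continuousOn _)
    (Polynomial.differentiableOn _) fun p hp => ?_
  rw [interior_Icc] at hp
  rw [Polynomial.deriv, derivative_sum_range_bernsteinPolynomial]
  simp only [bernsteinPolynomial, eval_mul, eval_neg, eval_natCast, eval_pow, eval_sub, eval_one,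
    eval_X, neg_mul, neg_nonpos]
  exact mul_nonneg n.cast_nonneg <| mul_nonneg (mul_nonneg (Nat.cast_nonneg _)
    (pow_nonneg hp.1.le _)) (pow_nonneg (sub_nonneg.2 hp.2.le) _)

section CountInSet

variable {Ω ι : Type*} [Fintype ι] [DecidableEq ι] {A : Set Ω} [DecidablePred (· ∈ A)]

lemma preimage_filter_mem_singleton (s : Finset ι) :
    (fun Z : ι → Ω => univ.filter (Z · ∈ A)) ⁻¹' {s} =
      Set.univ.pi fun i => if i ∈ s then A else Aᶜ := by
  ext Z
  simp only [Set.mem_preimage, Set.mem_singleton_iff, Finset.ext_iff, mem_filter, mem_univ,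
    true_and, Set.mem_univ_pi]
  refine forall_congr' fun i => ?_
  split_ifs with hi <;> simp [hi]

variable [MeasurableSpace Ω]

lemma measurableSet_preimage_filter_mem (hA : MeasurableSet A) (S : Set (Finset ι)) :
    MeasurableSet ((fun Z : ι → Ω => univ.filter (Z · ∈ A)) ⁻¹' S) := by
  rw [← Set.biUnion_preimage_singleton]
  refine S.toFinite.measurableSet_biUnion fun s _ => ?_
  rw [preimage_filter_mem_singleton]
  exact .univ_pi fun i => by split_ifs; exacts [hA, hA.compl]

variable {μ : Measure Ω} [IsFiniteMeasure μ]

lemma measureReal_pi_preimage_filter_mem_singleton (s : Finset ι) :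
    (Measure.pi fun _ : ι => μ).real ((fun Z : ι → Ω => univ.filter (Z · ∈ A)) ⁻¹' {s}) =
      μ.real A ^ #s * μ.real Aᶜ ^ (Fintype.card ι - #s) := by
  rw [preimage_filter_mem_singleton, measureReal_def, Measure.pi_pi, ENNReal.toReal_prod]
  simp [apply_ite, prod_ite, filter_not, card_univ_sdiff, measureReal_def]

lemma measureReal_pi_card_filter_mem_eq (hA : MeasurableSet A) (j : ℕ) :
    (Measure.pi fun _ : ι => μ).real {Z | #(univ.filter (Z · ∈ A)) = j} =
      (Fintype.card ι).choose j * μ.real A ^ j * μ.real Aᶜ ^ (Fintype.card ι - j) := by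
  have hfibers : {Z : ι → Ω | #(univ.filter (Z · ∈ A)) = j} =
      (fun Z : ι → Ω => univ.filter (Z · ∈ A)) ⁻¹' ↑(powersetCard j (univ : Finset ι)) := by
    ext Z
    simp
  rw [hfibers, ← sum_measureReal_preimage_singleton _
    fun s _ => measurableSet_preimage_filter_mem hA {s}]
  rw [sum_congr rfl fun s hs => by
    rw [measureReal_pi_preimage_filter_mem_singleton, (mem_powersetCard.1 hs).2]]
  rw [sum_const, card_powersetCard, card_univ, nsmul_eq_mul, mul_assoc]

lemma measureReal_pi_card_filter_mem_le (hA : MeasurableSet A) (k : ℕ) :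
    (Measure.pi fun _ : ι => μ).real {Z | #(univ.filter (Z · ∈ A)) ≤ k} =
      ∑ j ∈ range (k + 1),
        (Fintype.card ι).choose j * μ.real A ^ j * μ.real Aᶜ ^ (Fintype.card ι - j) := by
  have hfibers : {Z : ι → Ω | #(univ.filter (Z · ∈ A)) ≤ k} =
      (fun Z : ι → Ω => #(univ.filter (Z · ∈ A))) ⁻¹' ↑(range (k + 1)) := by
    ext Z
    simp
  rw [hfibers, ← sum_measureReal_preimage_singleton _
    fun j _ => measurableSet_preimage_filter_mem hA {s | #s = j}]
  exact sum_congr rfl fun j _ => measureReal_pi_card_filter_mem_eq hA j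

end CountInSet

lemma exists_measureReal_Iio_le_le_measureReal_Iic (ν : Measure ℝ) [IsProbabilityMeasure ν]
    {ε : ℝ} (hε0 : 0 < ε) (hε1 : ε < 1) :
    ∃ q, ν.real (Set.Iio q) ≤ ε ∧ ε ≤ ν.real (Set.Iic q) := by
  set S := {x | ε ≤ cdf ν x}
  obtain ⟨b, hb⟩ := ((tendsto_cdf_atTop ν).eventually (eventually_ge_nhds hε1)).exists
  obtain ⟨a, ha⟩ :=
    eventually_atBot.1 ((tendsto_cdf_atBot ν).eventually (eventually_lt_nhds hε0))
  have hS : BddBelow S := ⟨a, fun x hx => le_of_not_ge fun hxa => (ha x hxa).not_ge hx⟩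
  refine ⟨sInf S, ?_, ?_⟩
  · have hleft : Function.leftLim (cdf ν) (sInf S) ≤ ε :=
      le_of_tendsto ((monotone_cdf ν).tendsto_leftLim _) <| eventually_nhdsWithin_of_forall
        fun x hx => (not_le.1 (notMem_of_lt_csInf (s := S) hx hS)).le
    rw [measureReal_def, ← measure_cdf ν, (cdf ν).measure_Iio (tendsto_cdf_atBot ν), sub_zero]
    exact ENNReal.toReal_le_of_le_ofReal hε0.le (ENNReal.ofReal_le_ofReal hleft)
  · have hright : ∀ x > sInf S, ε ≤ cdf ν x := fun x hx => by
      obtain ⟨s, hs, hsx⟩ := exists_lt_of_csInf_lt ⟨b, hb⟩ hx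
      exact hs.trans (monotone_cdf ν hsx.le)
    rw [← cdf_eq_real]
    exact ge_of_tendsto (((cdf ν).right_continuous _).mono Set.Ioi_subset_Ici_self)
      (eventually_nhdsWithin_of_forall hright)

lemma exists_measureReal_lt_le_le_measureReal_le {Ω : Type*} [MeasurableSpace Ω]
    (μ : Measure Ω) [IsProbabilityMeasure μ] {f : Ω → ℝ} (hf : Measurable f)
    {ε : ℝ} (hε0 : 0 < ε) (hε1 : ε < 1) :
    ∃ q, μ.real {z | f z < q} ≤ ε ∧ ε ≤ μ.real {z | f z ≤ q} := by
  have := Measure.isProbabilityMeasure_map (μ := μ) hf.aemeasurable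
  obtain ⟨q, hlt, hle⟩ := exists_measureReal_Iio_le_le_measureReal_Iic (μ.map f) hε0 hε1
  rw [map_measureReal_apply hf measurableSet_Iio] at hlt
  rw [map_measureReal_apply hf measurableSet_Iic] at hle
  exact ⟨q, hlt, hle⟩

lemma sSup_le_of_lt_card_filter_le {ι : Type*} [Fintype ι] (g : ι → ℝ) {k : ℕ} {q : ℝ}
    (hq : 0 ≤ q) (hk : k < #(univ.filter (g · ≤ q))) :
    sSup {τ : ℝ | 0 ≤ τ ∧ #(univ.filter (g · < τ)) ≤ k} ≤ q := by
  refine Real.sSup_le (fun τ ⟨_, hτ⟩ => le_of_not_gt fun hqτ => ?_) hq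
  have hmono : univ.filter (g · ≤ q) ⊆ univ.filter (g · < τ) :=
    monotone_filter_right _ fun _ _ hi => hi.trans_lt hqτ
  exact (hk.trans_le ((card_le_card hmono).trans hτ)).false

theorem pac_prediction_set_threshold_general
    {X Y : Type*} [MeasurableSpace X] [MeasurableSpace Y]
    (D : Measure (X × Y)) [IsProbabilityMeasure D]
    (f : X × Y → ℝ) (hfm : Measurable f) (hf : ∀ z, 0 ≤ f z)
    (n : ℕ) (ε δ : ℝ) (hε : ε ∈ Set.Ioo (0:ℝ) 1)
    (F : ℕ → ℝ)
    (hF : ∀ k, F k = ∑ i ∈ Finset.range (k + 1),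
      (n.choose i : ℝ) * ε ^ i * (1 - ε) ^ (n - i))
    (kstar : ℕ) (hk : F kstar ≤ δ)
    (tauHat : (Fin n → X × Y) → ℝ)
    (htau : ∀ Z : Fin n → X × Y, tauHat Z =
      sSup {τ : ℝ | 0 ≤ τ ∧
        (Finset.univ.filter fun i => f (Z i) < τ).card ≤ kstar}) :
    1 - δ ≤ ((Measure.pi fun _ : Fin n => D)
      {Z : Fin n → X × Y | (D {z : X × Y | f z < tauHat Z}).toReal ≤ ε}).toReal := by
  obtain ⟨hε0, hε1⟩ := hε
  obtain ⟨q, hq_lt, hq_le⟩ := exists_measureReal_lt_le_le_measureReal_le D hfm hε0 hε1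
  set A : Set (X × Y) := {z | f z ≤ q}
  have hA : MeasurableSet A := measurableSet_le hfm measurable_const
  have hq0 : 0 ≤ q := by
    by_contra! hq
    have hA_empty : A = ∅ :=
      Set.eq_empty_of_forall_notMem fun z hz => (hf z).not_gt (hz.trans_lt hq)
    rw [hA_empty, measureReal_empty] at hq_le
    exact hε0.not_ge hq_le
  set B := {Z : Fin n → X × Y | #(univ.filter (Z · ∈ A)) ≤ kstar}
  have hB : MeasurableSet B := measurableSet_preimage_filter_mem hA {s | #s ≤ kstar}
  have hB_le : (Measure.pi fun _ => D).real B ≤ δ := by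
    rw [measureReal_pi_card_filter_mem_le hA, probReal_compl_eq_one_sub hA, Fintype.card_fin]
    refine le_trans ?_ ((hF kstar).symm.trans_le hk)
    exact antitoneOn_sum_range_choose_mul_pow_mul_pow n kstar ⟨hε0.le, hε1.le⟩
      ⟨hε0.le.trans hq_le, measureReal_le_one⟩ hq_le
  have hgood : Bᶜ ⊆ {Z | (D {z | f z < tauHat Z}).toReal ≤ ε} := fun Z hZ => by
    have hτq : tauHat Z ≤ q := htau Z ▸ sSup_le_of_lt_card_filter_le _ hq0 (not_le.1 hZ)
    exact (measureReal_mono fun z hz => lt_of_lt_of_le hz hτq).trans hq_lt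
  calc 1 - δ ≤ 1 - (Measure.pi fun _ => D).real B := by linarith
    _ = (Measure.pi fun _ => D).real Bᶜ := (probReal_compl_eq_one_sub hB).symm
    _ ≤ _ := measureReal_mono hgood

/-- Theorem 1, PAC guarantee of the binomial-tail threshold: With `Z ~ Dⁿ`
i.i.d., score `f ≥ 0`, prediction sets `C_τ(x) = {y : f(x,y) ≥ τ}`, `k*` the largest `k`
with `F(k; n, ε) ≤ δ` (binomial CDF), and `τ̂(Z)` the largest `τ` such that the number of
calibration errors `#{i : yᵢ ∉ C_τ(xᵢ)}` is at most `k*` (with `τ̂ = 0` if infeasible), we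
have `P_{(x,y)~D}(y ∉ C_τ̂(x)) ≤ ε` with probability at least `1 - δ` over `Z`. -/
theorem pac_prediction_set_threshold
    {X Y : Type*} [MeasurableSpace X] [MeasurableSpace Y]
    (D : Measure (X × Y)) [IsProbabilityMeasure D]
    (f : X × Y → ℝ) (hfm : Measurable f) (hf : ∀ z, 0 ≤ f z)
    (n : ℕ) (ε δ : ℝ) (hε : ε ∈ Set.Ioo (0:ℝ) 1) (hδ : δ ∈ Set.Ioo (0:ℝ) 1)
    (F : ℕ → ℝ)
    (hF : ∀ k, F k = ∑ i ∈ Finset.range (k + 1),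
      (n.choose i : ℝ) * ε ^ i * (1 - ε) ^ (n - i))
    (kstar : ℕ) (hk : F kstar ≤ δ) (hkmax : ∀ k, F k ≤ δ → k ≤ kstar)
    (tauHat : (Fin n → X × Y) → ℝ)
    (htau : ∀ Z : Fin n → X × Y, tauHat Z =
      sSup {τ : ℝ | 0 ≤ τ ∧
        (Finset.univ.filter fun i => f (Z i) < τ).card ≤ kstar}) :
    1 - δ ≤ ((Measure.pi fun _ : Fin n => D)
      {Z : Fin n → X × Y | (D {z : X × Y | f z < tauHat Z}).toReal ≤ ε}).toReal :=
  pac_prediction_set_threshold_general D f hfm hf n ε δ hε F hF kstar hk tauHat htau
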